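/- Let Q ≥ 1 be a real number and let t be a positive integer. Let 𝒮(Q) be the set of perfect squares in the interval (Q, 2Q], and let 𝒮_t(Q) = { q ∈ ℕ : tq ∈ 𝒮(Q) }. Set g_t = f_t²/t (a positive integer). Then 𝒮_t(Q) = { q₂² · g_t : q₂ ∈ ℕ, √Q / f_t < q₂ ≤ √(2Q) / f_t }, and every element of 𝒮_t(Q) lies in the interval (Q/t, 2Q/t]. -/

import Mathlib

/-!
`f_t` is Mathlib's ceiling square root `Nat.ceilRoot 2 t`, the least `f` (for divisibility) with
`t ∣ f²`; hence `t ∣ n²` exactly when `f_t ∣ n`. So `tq` is a square iff `q = m² g_t`, and then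
`tq = (m f_t)²`; the window `Q < tq ≤ 2Q` becomes `√Q < m f_t ≤ √(2Q)`.
-/

open Finset

/-- `f_t = ∏_{p ∣ t} p^{⌈v_p(t)/2⌉}`, where `v_p(t)` is the `p`-adic valuation of `t`. -/
def ft (t : ℕ) : ℕ :=
  ∏ p ∈ t.primeFactors, p ^ ((t.factorization p + 1) / 2)

/-- `g_t = f_t² / t` (a positive integer, since `t ∣ f_t²`). -/
def gt' (t : ℕ) : ℕ := ft t ^ 2 / t

lemma ft_pos (t : ℕ) : 0 < ft t :=
  Finset.prod_pos fun _ hp => pow_pos (Nat.pos_of_mem_primeFactors hp) _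

section

variable {t : ℕ}

lemma ft_eq_ceilRoot (ht : t ≠ 0) : ft t = Nat.ceilRoot 2 t := by
  simp [ft, Nat.ceilRoot, ht, Finsupp.prod]

lemma dvd_sq_iff_ft_dvd (ht : t ≠ 0) {n : ℕ} : t ∣ n ^ 2 ↔ ft t ∣ n := by
  rw [ft_eq_ceilRoot ht, Nat.dvd_pow_iff_ceilRoot_dvd two_ne_zero]

lemma ft_sq_eq_mul_gt' (ht : t ≠ 0) : ft t ^ 2 = t * gt' t :=
  (Nat.mul_div_cancel' ((dvd_sq_iff_ft_dvd ht).2 dvd_rfl)).symm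

lemma mul_sq_mul_gt' (ht : t ≠ 0) (m : ℕ) : t * (m ^ 2 * gt' t) = (m * ft t) ^ 2 := by
  rw [mul_pow, ft_sq_eq_mul_gt' ht]
  ring

lemma isSquare_mul_iff_eq_sq_mul_gt' (ht : t ≠ 0) {q : ℕ} :
    IsSquare (t * q) ↔ ∃ m, q = m ^ 2 * gt' t := by
  constructor
  · rintro ⟨r, hr⟩
    obtain ⟨m, rfl⟩ : ft t ∣ r := (dvd_sq_iff_ft_dvd ht).1 ⟨q, by rw [sq, hr]⟩
    refine ⟨m, Nat.eq_of_mul_eq_mul_left (Nat.pos_of_ne_zero ht) ?_⟩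
    rw [hr, mul_sq_mul_gt' ht]
    ring
  · rintro ⟨m, rfl⟩
    rw [mul_sq_mul_gt' ht]
    exact IsSquare.sq _

end

lemma sqrt_div_lt_iff_lt_sq {Q c x : ℝ} (hQ : 0 ≤ Q) (hc : 0 < c) (hx : 0 ≤ x) :
    √Q / c < x ↔ Q < (x * c) ^ 2 := by
  rw [div_lt_iff₀ hc, Real.sqrt_lt hQ (by positivity)]

lemma le_sqrt_div_iff_sq_le {Q c x : ℝ} (hQ : 0 ≤ Q) (hc : 0 < c) (hx : 0 ≤ x) :
    x ≤ √Q / c ↔ (x * c) ^ 2 ≤ Q := by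
  rw [le_div_iff₀ hc, Real.le_sqrt (by positivity) hQ]

/-- With `𝒮(Q)` the set of perfect squares in `(Q, 2Q]` and `𝒮_t(Q) = {q : tq ∈ 𝒮(Q)}`:
`𝒮_t(Q) = {q₂² g_t : √Q/f_t < q₂ ≤ √(2Q)/f_t}`, and `𝒮_t(Q) ⊆ (Q/t, 2Q/t]`. -/
theorem stmt_11 (Q : ℝ) (hQ : 1 ≤ Q) (t : ℕ) (ht : 0 < t) :
    ({q : ℕ | IsSquare (t * q) ∧ Q < ((t * q : ℕ) : ℝ) ∧ ((t * q : ℕ) : ℝ) ≤ 2 * Q}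
        = {q : ℕ | ∃ q₂ : ℕ, Real.sqrt Q / ft t < (q₂ : ℝ) ∧
            (q₂ : ℝ) ≤ Real.sqrt (2 * Q) / ft t ∧ q = q₂ ^ 2 * gt' t}) ∧
      ∀ q : ℕ,
        (IsSquare (t * q) ∧ Q < ((t * q : ℕ) : ℝ) ∧ ((t * q : ℕ) : ℝ) ≤ 2 * Q) →
          Q / t < (q : ℝ) ∧ (q : ℝ) ≤ 2 * Q / t := by
  have hft : (0 : ℝ) < ft t := by exact_mod_cast ft_pos t
  have window (m : ℕ) :
      (Q < ((t * (m ^ 2 * gt' t) : ℕ) : ℝ) ∧ ((t * (m ^ 2 * gt' t) : ℕ) : ℝ) ≤ 2 * Q) ↔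
        (√Q / ft t < m ∧ (m : ℝ) ≤ √(2 * Q) / ft t) := by
    rw [mul_sq_mul_gt' ht.ne', sqrt_div_lt_iff_lt_sq (by linarith) hft m.cast_nonneg,
      le_sqrt_div_iff_sq_le (by linarith) hft m.cast_nonneg]
    push_cast
    rfl
  refine ⟨Set.ext fun q => ⟨?_, ?_⟩, ?_⟩
  · rintro ⟨hsq, hQtq⟩
    obtain ⟨m, rfl⟩ := (isSquare_mul_iff_eq_sq_mul_gt' ht.ne').1 hsq
    exact ⟨m, ((window m).1 hQtq).1, ((window m).1 hQtq).2, rfl⟩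
  · rintro ⟨m, hlo, hhi, rfl⟩
    exact ⟨(isSquare_mul_iff_eq_sq_mul_gt' ht.ne').2 ⟨m, rfl⟩, (window m).2 ⟨hlo, hhi⟩⟩
  · rintro q ⟨-, hlo, hhi⟩
    have htR : (0 : ℝ) < t := by exact_mod_cast ht
    push_cast at hlo hhi
    exact ⟨(div_lt_iff₀' htR).2 hlo, (le_div_iff₀' htR).2 hhi⟩
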